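/- arXiv:1709.08967 — 3 statements merged into one kernel-verified Lean document; each statement's English description precedes it below -/
import Mathlib

section
/- Let $X = X_1 \times X_2$ be a product of finite-dimensional real normed spaces, equipped with the max norm $\|(x_1,x_2)\|_\pi = \max\{\|x_1\|_1, \|x_2\|_2\}$. If $A : [-1,1] \to \mathrm{Isom}(X)$ is a norm-continuous path of linear isometries with $A(0) = I_X$, then there exists $\delta > 0$ such that for every $t \in [-\delta, \delta]$, $A(t)$ is a direct sum $A_1(t) \oplus A_2(t)$ of linear isometries $A_i(t) \in \mathrm{Isom}(X_i)$. -/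
open Set Function ContinuousLinearMap

lemma opNorm_le_of_unit {E F : Type*} [NormedAddCommGroup E] [NormedSpace ℝ E]
    [NormedAddCommGroup F] [NormedSpace ℝ F] (f : E →L[ℝ] F) {C : ℝ} (hC : 0 ≤ C)
    (h : ∀ x : E, ‖x‖ ≤ 1 → ‖f x‖ ≤ C) : ‖f‖ ≤ C := by
  refine f.opNorm_le_bound hC fun x => ?_
  rcases eq_or_ne x 0 with rfl | hx
  · simp [hC]
  · have hxn : 0 < ‖x‖ := norm_pos_iff.2 hx
    have hu : ‖(‖x‖⁻¹ • x)‖ ≤ 1 := by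
      rw [norm_smul, norm_inv, norm_norm, inv_mul_cancel₀ hxn.ne']
    have h2 := h _ hu
    rw [map_smul, norm_smul, norm_inv, norm_norm] at h2
    calc ‖f x‖ = ‖x‖ * (‖x‖⁻¹ * ‖f x‖) := by field_simp
    _ ≤ ‖x‖ * C := mul_le_mul_of_nonneg_left h2 hxn.le
    _ = C * ‖x‖ := mul_comm _ _

section L1
variable {Y₁ Y₂ : Type*}
  [NormedAddCommGroup Y₁] [NormedSpace ℝ Y₁]
  [NormedAddCommGroup Y₂] [NormedSpace ℝ Y₂]

lemma l1_norm_add (g h : (Y₁ × Y₂) →L[ℝ] ℝ)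
    (hg : ∀ y : Y₂, g (0, y) = 0) (hh : ∀ y : Y₁, h (y, 0) = 0) :
    ‖g + h‖ = ‖g‖ + ‖h‖ := by
  have hsplit : ∀ x : Y₁ × Y₂, x = ((x.1, 0) : Y₁ × Y₂) + (0, x.2) := by
    intro x; simp
  have hgx : ∀ x : Y₁ × Y₂, g x = g (x.1, 0) := fun x => by
    conv_lhs => rw [hsplit x]
    rw [map_add, hg, add_zero]
  have hhx : ∀ x : Y₁ × Y₂, h x = h (0, x.2) := fun x => by
    conv_lhs => rw [hsplit x]
    rw [map_add, hh, zero_add]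
  have key : ∀ x y : Y₁ × Y₂, ‖x‖ ≤ 1 → ‖y‖ ≤ 1 → |g x| + |h y| ≤ ‖g + h‖ := by
    intro x y hx hy
    set σ : ℝ := if 0 ≤ g x then 1 else -1 with hσ
    set τ : ℝ := if 0 ≤ h y then 1 else -1 with hτ
    have hσ1 : |σ| = 1 := by rw [hσ]; split_ifs <;> norm_num
    have hτ1 : |τ| = 1 := by rw [hτ]; split_ifs <;> norm_num
    set z : Y₁ × Y₂ := (σ • x.1, τ • y.2) with hzdef
    have hz : ‖z‖ ≤ 1 := by
      apply max_le
      · show ‖σ • x.1‖ ≤ 1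
        rw [norm_smul, Real.norm_eq_abs, hσ1, one_mul]
        exact le_trans (norm_fst_le x) hx
      · show ‖τ • y.2‖ ≤ 1
        rw [norm_smul, Real.norm_eq_abs, hτ1, one_mul]
        exact le_trans (norm_snd_le y) hy
    have h1 : g z = σ * g x := by
      rw [hgx z, show ((z.1, (0:Y₂)) : Y₁ × Y₂) = σ • ((x.1, 0) : Y₁ × Y₂) by
        simp [hzdef, Prod.smul_mk], map_smul, smul_eq_mul, ← hgx x]
    have h2 : h z = τ * h y := by
      rw [hhx z, show (((0:Y₁), z.2) : Y₁ × Y₂) = τ • (((0:Y₁), y.2) : Y₁ × Y₂) by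
        simp [hzdef, Prod.smul_mk], map_smul, smul_eq_mul, ← hhx y]
    have hσgx : σ * g x = |g x| := by
      rw [hσ]; split_ifs with h'
      · rw [one_mul, abs_of_nonneg h']
      · rw [neg_one_mul, abs_of_neg (lt_of_not_ge h')]
    have hτhy : τ * h y = |h y| := by
      rw [hτ]; split_ifs with h'
      · rw [one_mul, abs_of_nonneg h']
      · rw [neg_one_mul, abs_of_neg (lt_of_not_ge h')]
    have habs : |g x| + |h y| = |(g + h) z| := by
      rw [add_apply, h1, h2, hσgx, hτhy]
      exact (abs_of_nonneg (by positivity)).symm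
    rw [habs, ← Real.norm_eq_abs]
    calc ‖(g + h) z‖ ≤ ‖g + h‖ * ‖z‖ := (g + h).le_opNorm z
    _ ≤ ‖g + h‖ := mul_le_of_le_one_right (norm_nonneg _) hz
  have hg_le : ‖g‖ ≤ ‖g + h‖ := by
    refine opNorm_le_of_unit _ (norm_nonneg _) fun x hx => ?_
    have := key x 0 hx (by simp)
    have h0 : h 0 = 0 := map_zero h
    rw [Real.norm_eq_abs]
    rw [h0] at this; simp at this; linarith
  have hhb : ∀ y : Y₁ × Y₂, ‖y‖ ≤ 1 → |h y| ≤ ‖g + h‖ - ‖g‖ := by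
    intro y hy
    have hhy_le : |h y| ≤ ‖g + h‖ := by
      have he : h y = (g + h) (0, y.2) := by
        rw [add_apply, hg, zero_add, ← hhx y]
      rw [he, ← Real.norm_eq_abs]
      calc ‖(g + h) (0, y.2)‖ ≤ ‖g + h‖ * ‖((0 : Y₁), y.2)‖ := (g + h).le_opNorm _
      _ ≤ ‖g + h‖ := by
        refine mul_le_of_le_one_right (norm_nonneg _) (max_le (by simp) ?_)
        exact le_trans (norm_snd_le y) hy
    have h2 : ‖g‖ ≤ ‖g + h‖ - |h y| := by
      refine opNorm_le_of_unit _ (by linarith) fun x hx => ?_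
      have := key x y hx hy
      rw [Real.norm_eq_abs]; linarith
    linarith
  have hh_le : ‖h‖ ≤ ‖g + h‖ - ‖g‖ := by
    refine opNorm_le_of_unit _ (by linarith [hhb 0 (by simp : ‖(0 : Y₁ × Y₂)‖ ≤ 1)]) fun y hy => ?_
    rw [Real.norm_eq_abs]; exact hhb y hy
  have := norm_add_le g h
  linarith

end L1

section OneSide
variable {Y₁ Y₂ : Type*}
  [NormedAddCommGroup Y₁] [NormedSpace ℝ Y₁] [FiniteDimensional ℝ Y₁]
  [NormedAddCommGroup Y₂] [NormedSpace ℝ Y₂] [FiniteDimensional ℝ Y₂]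

set_option maxHeartbeats 2000000 in
lemma one_side (Tc : (Y₁ × Y₂) →L[ℝ] (Y₁ × Y₂)) (hi : ∀ x, ‖Tc x‖ = ‖x‖)
    (hs : Function.Surjective Tc) (hb : ∀ x, ‖Tc x - x‖ ≤ ‖x‖) :
    ∀ y : Y₂, (Tc (0, y)).1 = 0 := by
  classical
  obtain ⟨Sc, hSc1, hSc2, hScn⟩ :
      ∃ Sc : (Y₁ × Y₂) →L[ℝ] (Y₁ × Y₂), (∀ x, Tc (Sc x) = x) ∧ (∀ x, Sc (Tc x) = x) ∧
        (∀ x, ‖Sc x‖ = ‖x‖) := by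
    let E := LinearIsometryEquiv.ofSurjective ⟨Tc.toLinearMap, hi⟩ hs
    have hEapp : ∀ x, E x = Tc x := fun x => by
      show (LinearIsometryEquiv.ofSurjective ⟨Tc.toLinearMap, hi⟩ hs) x = Tc x
      rw [LinearIsometryEquiv.coe_ofSurjective]; rfl
    refine ⟨E.symm.toLinearIsometry.toContinuousLinearMap, fun x => ?_, fun x => ?_, fun x => ?_⟩
    · show Tc (E.symm x) = x
      rw [← hEapp]; exact E.apply_symm_apply x
    · show E.symm (Tc x) = x
      rw [← hEapp]; exact E.symm_apply_apply x
    · exact E.symm.norm_map x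
  set Φ : ((Y₁ × Y₂) →L[ℝ] ℝ) → ((Y₁ × Y₂) →L[ℝ] ℝ) := fun f => f.comp Tc with hΦdef
  set Ψ : ((Y₁ × Y₂) →L[ℝ] ℝ) → ((Y₁ × Y₂) →L[ℝ] ℝ) := fun f => f.comp Sc with hΨdef
  have hΨΦ : ∀ f, Ψ (Φ f) = f := fun f => by
    refine ContinuousLinearMap.ext fun x => ?_
    show f (Tc (Sc x)) = f x
    rw [hSc1]
  have hΦΨ : ∀ f, Φ (Ψ f) = f := fun f => by
    refine ContinuousLinearMap.ext fun x => ?_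
    show f (Sc (Tc x)) = f x
    rw [hSc2]
  have hΦle : ∀ f, ‖Φ f‖ ≤ ‖f‖ := by
    intro f
    refine ContinuousLinearMap.opNorm_le_bound _ (norm_nonneg f) fun x => ?_
    calc ‖(Φ f) x‖ = ‖f (Tc x)‖ := rfl
    _ ≤ ‖f‖ * ‖Tc x‖ := f.le_opNorm _
    _ = ‖f‖ * ‖x‖ := by rw [hi]
  have hΨle : ∀ f, ‖Ψ f‖ ≤ ‖f‖ := by
    intro f
    refine ContinuousLinearMap.opNorm_le_bound _ (norm_nonneg f) fun x => ?_
    calc ‖(Ψ f) x‖ = ‖f (Sc x)‖ := rfl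
    _ ≤ ‖f‖ * ‖Sc x‖ := f.le_opNorm _
    _ = ‖f‖ * ‖x‖ := by rw [hScn]
  have hΦn : ∀ f, ‖Φ f‖ = ‖f‖ := by
    intro f
    refine le_antisymm (hΦle f) ?_
    have h2 : ‖Ψ (Φ f)‖ ≤ ‖Φ f‖ := hΨle _
    rwa [hΨΦ] at h2
  set B : Set ((Y₁ × Y₂) →L[ℝ] ℝ) := Metric.closedBall 0 1 with hBdef
  have hmemB : ∀ f, f ∈ B ↔ ‖f‖ ≤ 1 := fun f => mem_closedBall_zero_iff
  have hBc : IsCompact B := isCompact_closedBall 0 1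
  have hBconv : Convex ℝ B := convex_closedBall 0 1
  have hKM : closure (convexHull ℝ (B.extremePoints ℝ)) = B :=
    closure_convexHull_extremePoints hBc hBconv
  have hextn : ∀ f ∈ B.extremePoints ℝ, f ≠ 0 → ‖f‖ = 1 := by
    intro f hf hf0
    by_contra hne
    have hlt : ‖f‖ < 1 := lt_of_le_of_ne ((hmemB f).1 (mem_extremePoints.1 hf).1) hne
    have hpos : 0 < ‖f‖ := norm_pos_iff.2 hf0
    set c : ℝ := 1 - ‖f‖ with hc
    have hcpos : 0 < c := by rw [hc]; linarith
    have hmem1 : (1 + c) • f ∈ B := by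
      rw [hmemB, norm_smul (1+c) f, Real.norm_eq_abs, abs_of_pos (by linarith : (0:ℝ) < 1 + c), hc]
      nlinarith
    have hmem2 : (1 - c) • f ∈ B := by
      rw [hmemB, norm_smul (1-c) f, Real.norm_eq_abs, abs_of_nonneg (by rw [hc]; linarith : (0:ℝ) ≤ 1 - c), hc]
      nlinarith
    have hseg : f ∈ openSegment ℝ ((1 + c) • f) ((1 - c) • f) := by
      refine ⟨1/2, 1/2, by norm_num, by norm_num, by norm_num, ?_⟩
      rw [smul_smul, smul_smul, ← add_smul,
        show (1/2 : ℝ) * (1 + c) + (1/2) * (1 - c) = 1 by ring, one_smul]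
    obtain ⟨h1, _⟩ := (mem_extremePoints.1 hf).2 _ hmem1 _ hmem2 hseg
    rw [add_smul, one_smul] at h1
    have hcf : c • f = 0 := by
      have := congrArg (fun u => u - f) h1
      simpa using this
    rcases smul_eq_zero.1 hcf with h | h
    · exact hcpos.ne' h
    · exact hf0 h
  have hΦB : ∀ f ∈ B, Φ f ∈ B := fun f hf => (hmemB _).2 (le_trans (hΦle f) ((hmemB f).1 hf))
  have hΨB : ∀ f ∈ B, Ψ f ∈ B := fun f hf => (hmemB _).2 (le_trans (hΨle f) ((hmemB f).1 hf))
  have hΦext : ∀ f ∈ B.extremePoints ℝ, Φ f ∈ B.extremePoints ℝ := by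
    intro f hf
    refine mem_extremePoints.2 ⟨hΦB f (mem_extremePoints.1 hf).1, ?_⟩
    rintro g hg h' hh' hseg0
    obtain ⟨a, b, ha, hb', hab, heq⟩ := hseg0
    have hlin : Ψ (a • g + b • h') = a • Ψ g + b • Ψ h' := by
      show (a • g + b • h').comp Sc = a • g.comp Sc + b • h'.comp Sc
      rw [ContinuousLinearMap.add_comp, ContinuousLinearMap.smul_comp,
        ContinuousLinearMap.smul_comp]
    have hseg' : f ∈ openSegment ℝ (Ψ g) (Ψ h') := by
      refine ⟨a, b, ha, hb', hab, ?_⟩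
      rw [← hlin, heq, hΨΦ]
    obtain ⟨h1, h2⟩ := (mem_extremePoints.1 hf).2 _ (hΨB g hg) _ (hΨB h' hh') hseg'
    constructor
    · rw [← hΦΨ g, h1]
    · rw [← hΦΨ h', h2]
  have hdich : ∀ f ∈ B.extremePoints ℝ,
      (∀ y : Y₂, f (0, y) = 0) ∨ (∀ y : Y₁, f (y, 0) = 0) := by
    intro f hf
    set g : (Y₁ × Y₂) →L[ℝ] ℝ :=
      f.comp ((ContinuousLinearMap.inl ℝ Y₁ Y₂).comp (ContinuousLinearMap.fst ℝ Y₁ Y₂)) with hgdef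
    set h' : (Y₁ × Y₂) →L[ℝ] ℝ :=
      f.comp ((ContinuousLinearMap.inr ℝ Y₁ Y₂).comp (ContinuousLinearMap.snd ℝ Y₁ Y₂)) with hhdef
    have hgapp : ∀ x : Y₁ × Y₂, g x = f (x.1, 0) := fun x => rfl
    have hhapp : ∀ x : Y₁ × Y₂, h' x = f (0, x.2) := fun x => rfl
    have hgh : g + h' = f := by
      refine ContinuousLinearMap.ext fun x => ?_
      rw [ContinuousLinearMap.add_apply, hgapp, hhapp, ← map_add]
      congr 1
      simp
    have hg0 : ∀ y : Y₂, g (0, y) = 0 := fun y => by rw [hgapp]; simp; exact map_zero f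
    have hh0 : ∀ y : Y₁, h' (y, 0) = 0 := fun y => by rw [hhapp]; simp; exact map_zero f
    rcases eq_or_ne g 0 with hgz | hgz
    · right; intro y
      have hy := hgapp (y, 0)
      rw [hgz] at hy; simpa using hy.symm
    rcases eq_or_ne h' 0 with hhz | hhz
    · left; intro y
      have hy := hhapp (0, y)
      rw [hhz] at hy; simpa using hy.symm
    have hf0 : f ≠ 0 := by
      intro hf0
      apply hgz
      refine ContinuousLinearMap.ext fun x => ?_
      rw [hgapp, hf0]; simp
    have hfn : ‖f‖ = 1 := hextn f hf hf0
    have hsum : ‖g‖ + ‖h'‖ = 1 := by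
      rw [← l1_norm_add g h' hg0 hh0, hgh, hfn]
    have hgpos : 0 < ‖g‖ := norm_pos_iff.2 hgz
    have hhpos : 0 < ‖h'‖ := norm_pos_iff.2 hhz
    have hp : (‖g‖⁻¹ • g) ∈ B := by
      refine (hmemB _).2 ?_
      rw [norm_smul ‖g‖⁻¹ g, norm_inv, norm_norm, inv_mul_cancel₀ hgpos.ne']
    have hq : (‖h'‖⁻¹ • h') ∈ B := by
      refine (hmemB _).2 ?_
      rw [norm_smul ‖h'‖⁻¹ h', norm_inv, norm_norm, inv_mul_cancel₀ hhpos.ne']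
    have hseg : f ∈ openSegment ℝ (‖g‖⁻¹ • g) (‖h'‖⁻¹ • h') :=
      ⟨‖g‖, ‖h'‖, hgpos, hhpos, hsum, by
        rw [smul_inv_smul₀ hgpos.ne', smul_inv_smul₀ hhpos.ne', hgh]⟩
    obtain ⟨h1, _⟩ := (mem_extremePoints.1 hf).2 _ hp _ hq hseg
    left
    intro y
    rw [← h1, ContinuousLinearMap.smul_apply, hg0, smul_zero]
  have hΦnear : ∀ f, ‖Φ f - f‖ ≤ ‖f‖ := by
    intro f
    refine ContinuousLinearMap.opNorm_le_bound _ (norm_nonneg f) fun x => ?_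
    have hx : (Φ f - f) x = f (Tc x - x) := by
      rw [ContinuousLinearMap.sub_apply, map_sub]; rfl
    rw [hx]
    calc ‖f (Tc x - x)‖ ≤ ‖f‖ * ‖Tc x - x‖ := f.le_opNorm _
    _ ≤ ‖f‖ * ‖x‖ := mul_le_mul_of_nonneg_left (hb x) (norm_nonneg f)
  have hkey : ∀ f ∈ B.extremePoints ℝ, (∀ y : Y₂, f (0, y) = 0) →
      ∀ y : Y₂, (Φ f) (0, y) = 0 := by
    intro f hf hfV y
    rcases eq_or_ne f 0 with rfl | hf0
    · show (0 : (Y₁ × Y₂) →L[ℝ] ℝ).comp Tc (0, y) = 0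
      rw [ContinuousLinearMap.zero_comp]; rfl
    have hfn : ‖f‖ = 1 := hextn f hf hf0
    rcases hdich (Φ f) (hΦext f hf) with hl | hr
    · exact hl y
    · exfalso
      have hΦfn : ‖Φ f‖ = 1 := by rw [hΦn, hfn]
      have hneg : ∀ y' : Y₂, (-f) (0, y') = 0 := fun y' => by
        rw [ContinuousLinearMap.neg_apply, hfV, neg_zero]
      have hL1 := l1_norm_add (-f) (Φ f) hneg hr
      rw [neg_add_eq_sub, norm_neg, hfn, hΦfn] at hL1
      have hnear := hΦnear f
      rw [hL1, hfn] at hnear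
      linarith
  set W₁ : Submodule ℝ ((Y₁ × Y₂) →L[ℝ] ℝ) :=
    Submodule.span ℝ (B.extremePoints ℝ ∩ {f | ∀ y : Y₂, f (0, y) = 0}) with hW₁def
  set W₂ : Submodule ℝ ((Y₁ × Y₂) →L[ℝ] ℝ) :=
    Submodule.span ℝ (B.extremePoints ℝ ∩ {f | ∀ y : Y₁, f (y, 0) = 0}) with hW₂def
  have hW₁pred : ∀ f ∈ W₁, ∀ y : Y₂, f (0, y) = 0 := by
    intro f hf
    refine Submodule.span_induction (p := fun f _ => ∀ y : Y₂, f (0, y) = 0)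
      ?_ ?_ ?_ ?_ hf
    · intro g hg; exact hg.2
    · intro y; rfl
    · intro a b _ _ ha hb' y
      rw [ContinuousLinearMap.add_apply, ha, hb', add_zero]
    · intro a x _ hx y
      rw [ContinuousLinearMap.smul_apply, hx, smul_zero]
  have hW₂pred : ∀ f ∈ W₂, ∀ y : Y₁, f (y, 0) = 0 := by
    intro f hf
    refine Submodule.span_induction (p := fun f _ => ∀ y : Y₁, f (y, 0) = 0)
      ?_ ?_ ?_ ?_ hf
    · intro g hg; exact hg.2
    · intro y; rfl
    · intro a b _ _ ha hb' y
      rw [ContinuousLinearMap.add_apply, ha, hb', add_zero]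
    · intro a x _ hx y
      rw [ContinuousLinearMap.smul_apply, hx, smul_zero]
  have hsup : ∀ f : (Y₁ × Y₂) →L[ℝ] ℝ, f ∈ W₁ ⊔ W₂ := by
    have hBsub : B ⊆ ↑(W₁ ⊔ W₂) := by
      rw [← hKM]
      refine closure_minimal (convexHull_min ?_ (W₁ ⊔ W₂).convex)
        (W₁ ⊔ W₂).closed_of_finiteDimensional
      intro f hf
      rcases hdich f hf with hl | hr
      · exact Submodule.mem_sup_left (Submodule.subset_span ⟨hf, hl⟩)
      · exact Submodule.mem_sup_right (Submodule.subset_span ⟨hf, hr⟩)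
    intro f
    rcases eq_or_ne f 0 with rfl | hf0
    · exact Submodule.zero_mem _
    have hfp : (0:ℝ) < ‖f‖ := norm_pos_iff.2 hf0
    have h1 : (‖f‖⁻¹ • f) ∈ W₁ ⊔ W₂ := by
      refine hBsub ((hmemB _).2 ?_)
      rw [norm_smul ‖f‖⁻¹ f, norm_inv, norm_norm, inv_mul_cancel₀ hfp.ne']

    have h2 := (W₁ ⊔ W₂).smul_mem ‖f‖ h1
    rwa [smul_inv_smul₀ hfp.ne'] at h2
  have hVW : ∀ f : (Y₁ × Y₂) →L[ℝ] ℝ, (∀ y : Y₂, f (0, y) = 0) → f ∈ W₁ := by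
    intro f hfV
    obtain ⟨w₁, hw₁, w₂, hw₂, hw⟩ := Submodule.mem_sup.1 (hsup f)
    have hw₂V2 : ∀ y : Y₁, w₂ (y, 0) = 0 := hW₂pred w₂ hw₂
    have hw₁V1 : ∀ y : Y₂, w₁ (0, y) = 0 := hW₁pred w₁ hw₁
    have hw₂V1 : ∀ y : Y₂, w₂ (0, y) = 0 := by
      intro y
      have happ := congrArg (fun u : (Y₁ × Y₂) →L[ℝ] ℝ => u (0, y)) hw
      simp only [ContinuousLinearMap.add_apply] at happ
      rw [hw₁V1, hfV, zero_add] at happ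
      exact happ
    have hw₂0 : w₂ = 0 := by
      refine ContinuousLinearMap.ext fun x => ?_
      have hx2 : x = ((x.1, 0) : Y₁ × Y₂) + (0, x.2) := by simp
      calc w₂ x = w₂ ((x.1, 0) + (0, x.2)) := by rw [← hx2]
      _ = w₂ (x.1, 0) + w₂ (0, x.2) := map_add _ _ _
      _ = 0 := by rw [hw₂V2, hw₂V1, add_zero]
      _ = (0 : (Y₁ × Y₂) →L[ℝ] ℝ) x := rfl
    rw [← hw, hw₂0, add_zero]
    exact hw₁
  intro y
  have hfW : ∀ f : (Y₁ × Y₂) →L[ℝ] ℝ, (∀ y' : Y₂, f (0, y') = 0) → f (Tc (0, y)) = 0 := by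
    intro f hfV
    have hmem : f ∈ W₁ := hVW f hfV
    refine Submodule.span_induction (p := fun g _ => g (Tc (0, y)) = 0) ?_ ?_ ?_ ?_ hmem
    · intro g hg
      exact hkey g hg.1 hg.2 y
    · rfl
    · intro a b _ _ ha hb'
      rw [ContinuousLinearMap.add_apply, ha, hb', add_zero]
    · intro a x _ hx
      rw [ContinuousLinearMap.smul_apply, hx, smul_zero]
  have hdual : ∀ φ : Module.Dual ℝ Y₁, φ ((Tc (0, y)).1) = 0 := by
    intro φ
    set f : (Y₁ × Y₂) →L[ℝ] ℝ :=
      LinearMap.toContinuousLinearMap (φ.comp (LinearMap.fst ℝ Y₁ Y₂)) with hfdef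
    have hfapp : ∀ x : Y₁ × Y₂, f x = φ x.1 := fun x => by
      rfl
    have h0 := hfW f (fun y' => by rw [hfapp]; simp)
    rw [hfapp] at h0
    exact h0
  exact (Module.forall_dual_apply_eq_zero_iff ℝ _).1 hdual



lemma other_side (Tc : (Y₁ × Y₂) →L[ℝ] (Y₁ × Y₂)) (hi : ∀ x, ‖Tc x‖ = ‖x‖)
    (hs : Function.Surjective Tc) (hb : ∀ x, ‖Tc x - x‖ ≤ ‖x‖) :
    ∀ y : Y₁, (Tc (y, 0)).2 = 0 := by
  set sw12 : (Y₁ × Y₂) →L[ℝ] (Y₂ × Y₁) :=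
    (ContinuousLinearMap.snd ℝ Y₁ Y₂).prod (ContinuousLinearMap.fst ℝ Y₁ Y₂) with h12
  set sw21 : (Y₂ × Y₁) →L[ℝ] (Y₁ × Y₂) :=
    (ContinuousLinearMap.snd ℝ Y₂ Y₁).prod (ContinuousLinearMap.fst ℝ Y₂ Y₁) with h21
  have h12app : ∀ x : Y₁ × Y₂, sw12 x = (x.2, x.1) := fun x => rfl
  have h21app : ∀ x : Y₂ × Y₁, sw21 x = (x.2, x.1) := fun x => rfl
  have hnorm12 : ∀ x : Y₁ × Y₂, ‖sw12 x‖ = ‖x‖ := fun x => by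
    rw [h12app, Prod.norm_def, Prod.norm_def, max_comm]
  have hnorm21 : ∀ x : Y₂ × Y₁, ‖sw21 x‖ = ‖x‖ := fun x => by
    rw [h21app, Prod.norm_def, Prod.norm_def, max_comm]
  set Tc' : (Y₂ × Y₁) →L[ℝ] (Y₂ × Y₁) := (sw12.comp Tc).comp sw21 with hT'
  have hT'app : ∀ x : Y₂ × Y₁, Tc' x = sw12 (Tc (sw21 x)) := fun x => rfl
  have hi' : ∀ x, ‖Tc' x‖ = ‖x‖ := fun x => by rw [hT'app, hnorm12, hi, hnorm21]
  have hs' : Function.Surjective Tc' := by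
    intro y
    obtain ⟨p, hp⟩ := hs (sw21 y)
    refine ⟨sw12 p, ?_⟩
    rw [hT'app, show sw21 (sw12 p) = p from rfl, hp, show sw12 (sw21 y) = y from rfl]
  have hb' : ∀ x, ‖Tc' x - x‖ ≤ ‖x‖ := by
    intro x
    have he : Tc' x - x = sw12 (Tc (sw21 x) - sw21 x) := by
      rw [hT'app, map_sub, show sw12 (sw21 x) = x from rfl]
    rw [he, hnorm12]
    exact (hb _).trans (hnorm21 x).le
  intro y
  exact one_side Tc' hi' hs' hb' y

end OneSide

/-- A norm-continuous path of surjective linear isometries of a max-norm product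
`X₁ × X₂` starting at the identity stays block-diagonal near `t = 0`. -/
theorem stmt_12 (X₁ X₂ : Type*)
    [NormedAddCommGroup X₁] [NormedSpace ℝ X₁] [FiniteDimensional ℝ X₁]
    [NormedAddCommGroup X₂] [NormedSpace ℝ X₂] [FiniteDimensional ℝ X₂]
    (A : ℝ → (X₁ × X₂) →L[ℝ] (X₁ × X₂))
    (hiso : ∀ t ∈ Set.Icc (-1 : ℝ) 1, (∀ x, ‖A t x‖ = ‖x‖) ∧ Function.Surjective (A t))
    (hcont : ContinuousOn A (Set.Icc (-1 : ℝ) 1))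
    (hA0 : A 0 = ContinuousLinearMap.id ℝ (X₁ × X₂)) :
    ∃ δ > (0 : ℝ), ∀ t ∈ Set.Icc (-1 : ℝ) 1, |t| ≤ δ →
      ∃ (A₁ : X₁ →L[ℝ] X₁) (A₂ : X₂ →L[ℝ] X₂),
        (∀ x₁, ‖A₁ x₁‖ = ‖x₁‖) ∧ Function.Surjective A₁ ∧
        (∀ x₂, ‖A₂ x₂‖ = ‖x₂‖) ∧ Function.Surjective A₂ ∧
        ∀ x : X₁ × X₂, A t x = (A₁ x.1, A₂ x.2) := by
  have hc0 : ContinuousWithinAt A (Set.Icc (-1 : ℝ) 1) 0 :=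
    hcont 0 (by constructor <;> norm_num)
  rw [Metric.continuousWithinAt_iff] at hc0
  obtain ⟨δ, hδpos, hδ⟩ := hc0 1 one_pos
  refine ⟨δ / 2, by positivity, ?_⟩
  intro t ht hts
  have hdist : dist t 0 < δ := by
    rw [Real.dist_eq, sub_zero]
    have h0 := abs_nonneg t
    linarith
  have h1 : ‖A t - ContinuousLinearMap.id ℝ (X₁ × X₂)‖ < 1 := by
    have h2 := hδ ht hdist
    rwa [dist_eq_norm, hA0] at h2
  obtain ⟨hti, htsur⟩ := hiso t ht
  have hb : ∀ x : X₁ × X₂, ‖A t x - x‖ ≤ ‖x‖ := by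
    intro x
    have h2 : A t x - x = (A t - ContinuousLinearMap.id ℝ (X₁ × X₂)) x := by
      rw [ContinuousLinearMap.sub_apply, ContinuousLinearMap.id_apply]
    rw [h2]
    calc ‖(A t - ContinuousLinearMap.id ℝ (X₁ × X₂)) x‖
        ≤ ‖A t - ContinuousLinearMap.id ℝ (X₁ × X₂)‖ * ‖x‖ :=
          ContinuousLinearMap.le_opNorm _ _
    _ ≤ 1 * ‖x‖ := mul_le_mul_of_nonneg_right h1.le (norm_nonneg x)
    _ = ‖x‖ := one_mul _
  have h₁ := one_side (A t) hti htsur hb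
  have h₂ := other_side (A t) hti htsur hb
  set A₁ : X₁ →L[ℝ] X₁ :=
    (ContinuousLinearMap.fst ℝ X₁ X₂).comp ((A t).comp (ContinuousLinearMap.inl ℝ X₁ X₂)) with hA₁
  set A₂ : X₂ →L[ℝ] X₂ :=
    (ContinuousLinearMap.snd ℝ X₁ X₂).comp ((A t).comp (ContinuousLinearMap.inr ℝ X₁ X₂)) with hA₂
  have hA₁app : ∀ y, A₁ y = (A t (y, 0)).1 := fun y => rfl
  have hA₂app : ∀ y, A₂ y = (A t (0, y)).2 := fun y => rfl
  have hblock : ∀ x : X₁ × X₂, A t x = (A₁ x.1, A₂ x.2) := by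
    intro x
    have hsplit : A t x = A t (x.1, 0) + A t (0, x.2) := by
      rw [← map_add]; congr 1; simp
    have e1 : A t (x.1, 0) = ((A₁ x.1 : X₁), (0 : X₂)) := by
      rw [hA₁app]; exact Prod.ext rfl (h₂ x.1)
    have e2 : A t (0, x.2) = ((0 : X₁), A₂ x.2) := by
      rw [hA₂app]; exact Prod.ext (h₁ x.2) rfl
    rw [hsplit, e1, e2]
    simp
  refine ⟨A₁, A₂, ?_, ?_, ?_, ?_, hblock⟩
  · intro y
    have h3 := hti (y, 0)
    rw [hblock (y, 0)] at h3
    rw [map_zero] at h3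
    simpa [Prod.norm_def] using h3
  · intro y₁
    obtain ⟨p, hp⟩ := htsur (y₁, 0)
    rw [hblock p] at hp
    exact ⟨p.1, (Prod.ext_iff.1 hp).1⟩
  · intro y
    have h3 := hti (0, y)
    rw [hblock (0, y)] at h3
    rw [map_zero] at h3
    simpa [Prod.norm_def] using h3
  · intro y₂
    obtain ⟨p, hp⟩ := htsur (0, y₂)
    rw [hblock p] at hp
    exact ⟨p.2, (Prod.ext_iff.1 hp).2⟩
end

section
/- Let $X = X_1 \times X_2$ with max norm, and suppose a linear isometry $A$ of $X$ has block form $\begin{pmatrix} A_{11} & A_{12} \\ A_{21} & A_{22}\end{pmatrix}$ where $A_{11} \in \mathrm{Isom}(X_1)$ and $A_{22} \in \mathrm{Isom}(X_2)$. Then $A_{12} = 0$ and $A_{21} = 0$. -/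
/-- If a linear isometry `A` of the max-norm product `X₁ × X₂` has diagonal blocks
`A₁₁, A₂₂` which are surjective isometries of the factors, then the off-diagonal
blocks vanish. -/
theorem stmt_13 (X₁ X₂ : Type*)
    [NormedAddCommGroup X₁] [NormedSpace ℝ X₁] [FiniteDimensional ℝ X₁]
    [NormedAddCommGroup X₂] [NormedSpace ℝ X₂] [FiniteDimensional ℝ X₂]
    (A : (X₁ × X₂) →ₗ[ℝ] (X₁ × X₂))
    (hA : ∀ x : X₁ × X₂, ‖A x‖ = ‖x‖)
    (h11iso : ∀ x₁ : X₁, ‖(A (x₁, 0)).1‖ = ‖x₁‖)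
    (h11surj : Function.Surjective fun x₁ : X₁ => (A (x₁, 0)).1)
    (h22iso : ∀ x₂ : X₂, ‖(A (0, x₂)).2‖ = ‖x₂‖)
    (h22surj : Function.Surjective fun x₂ : X₂ => (A (0, x₂)).2) :
    (∀ x₂ : X₂, (A (0, x₂)).1 = 0) ∧ (∀ x₁ : X₁, (A (x₁, 0)).2 = 0) := by
  constructor
  · intro y
    by_contra hb
    set b := (A (0, y)).1 with hbdef
    have hb0 : (0:ℝ) < ‖b‖ := norm_pos_iff.mpr hb
    obtain ⟨x, hx⟩ := h11surj ((‖y‖ / ‖b‖) • b)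
    simp only at hx
    have hxnorm : ‖x‖ = ‖y‖ := by
      have h := h11iso x
      rw [hx, norm_smul, Real.norm_eq_abs, abs_div, abs_norm, abs_norm,
        div_mul_cancel₀ _ (ne_of_gt hb0)] at h
      exact h.symm
    have hsum : A (x, y) = A (x, 0) + A (0, y) := by
      rw [← map_add, Prod.mk_add_mk, add_zero, zero_add]
    have h1 : (A (x, y)).1 = (‖y‖ / ‖b‖ + 1) • b := by
      rw [hsum, Prod.fst_add, hx, add_smul, one_smul]
    have hle : ‖(A (x, y)).1‖ ≤ ‖A (x, y)‖ := norm_fst_le _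
    rw [hA, h1, norm_smul] at hle
    have hxy : ‖(x, y)‖ = ‖y‖ := by
      rw [Prod.norm_def, hxnorm, max_self]
    rw [hxy, Real.norm_of_nonneg (by positivity), add_mul, one_mul,
      div_mul_cancel₀ _ (ne_of_gt hb0)] at hle
    linarith
  · intro y
    by_contra hb
    set b := (A (y, 0)).2 with hbdef
    have hb0 : (0:ℝ) < ‖b‖ := norm_pos_iff.mpr hb
    obtain ⟨x, hx⟩ := h22surj ((‖y‖ / ‖b‖) • b)
    simp only at hx
    have hxnorm : ‖x‖ = ‖y‖ := by
      have h := h22iso x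
      rw [hx, norm_smul, Real.norm_eq_abs, abs_div, abs_norm, abs_norm,
        div_mul_cancel₀ _ (ne_of_gt hb0)] at h
      exact h.symm
    have hsum : A (y, x) = A (y, 0) + A (0, x) := by
      rw [← map_add, Prod.mk_add_mk, add_zero, zero_add]
    have h1 : (A (y, x)).2 = (‖y‖ / ‖b‖ + 1) • b := by
      rw [hsum, Prod.snd_add, hx, add_smul, one_smul, add_comm]
    have hle : ‖(A (y, x)).2‖ ≤ ‖A (y, x)‖ := norm_snd_le _
    rw [hA, h1, norm_smul] at hle
    have hxy : ‖(y, x)‖ = ‖y‖ := by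
      rw [Prod.norm_def, hxnorm, max_self]
    rw [hxy, Real.norm_of_nonneg (by positivity), add_mul, one_mul,
      div_mul_cancel₀ _ (ne_of_gt hb0)] at hle
    linarith
end

section
/- The map $\Psi : \mathbb{R}^4 \to H_2(\mathbb{C})$, $(w,x,y,z) \mapsto \frac{1}{2}\begin{pmatrix} z+y & x - wi \\ x + wi & z - y\end{pmatrix}$, is a real-linear isometric isomorphism from $(\mathbb{R}^4, \|\cdot\|_{\mathrm{hcyl}})$ onto $(H_2(\mathbb{C}), \|\cdot\|_{c_1})$, where $\|(w,x,y,z)\|_{\mathrm{hcyl}} = \max\{\sqrt{w^2+x^2+y^2}, |z|\}$. -/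
open Matrix

/-- The trace norm of a `2 × 2` complex hermitian matrix: the sum of the absolute
values of its eigenvalues. -/
noncomputable def traceNormC (A : Matrix (Fin 2) (Fin 2) ℂ) (hA : A.IsHermitian) : ℝ :=
  ∑ i, |hA.eigenvalues i|

/-- The map `Ψ(w,x,y,z) = ½ [[z+y, x-wi], [x+wi, z-y]]`. -/
noncomputable def PsiC : ℝ × ℝ × ℝ × ℝ → Matrix (Fin 2) (Fin 2) ℂ := fun v =>
  (1 / 2 : ℂ) •
    !![(v.2.2.2 : ℂ) + (v.2.2.1 : ℂ), (v.2.1 : ℂ) - (v.1 : ℂ) * Complex.I;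
       (v.2.1 : ℂ) + (v.1 : ℂ) * Complex.I, (v.2.2.2 : ℂ) - (v.2.2.1 : ℂ)]

lemma trace_eq_sum_eig {A : Matrix (Fin 2) (Fin 2) ℂ} (hA : A.IsHermitian) :
    A.trace = ∑ i, (hA.eigenvalues i : ℂ) := by
  conv_lhs => rw [hA.spectral_theorem]
  rw [Unitary.conjStarAlgAut_apply, Matrix.trace_mul_comm, ← mul_assoc, Unitary.coe_star_mul_self, one_mul]
  simp [Matrix.trace_diagonal]

lemma key_abs (a b z r : ℝ) (hr : 0 ≤ r) (hs : a + b = z)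
    (hp : a * b = (z ^ 2 - r ^ 2) / 4) : |a| + |b| = max r |z| := by
  have hz2 : z ^ 2 = a ^ 2 + 2 * (a * b) + b ^ 2 := by rw [← hs]; ring
  have e : (|a| + |b|) ^ 2 = |a| ^ 2 + 2 * (|a| * |b|) + |b| ^ 2 := by ring
  have h1 : (|a| + |b|) ^ 2 = (max r |z|) ^ 2 := by
    rcases le_or_gt 0 (a * b) with h | h
    · have hrz : r ≤ |z| := by nlinarith [abs_nonneg z, sq_abs z]
      rw [max_eq_right hrz]
      have hab : |a| * |b| = a * b := by rw [← abs_mul, abs_of_nonneg h]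
      rw [e, hab, sq_abs, sq_abs, sq_abs]; linarith
    · have hzr : |z| ≤ r := by nlinarith [abs_nonneg z, sq_abs z]
      rw [max_eq_left hzr]
      have hab : |a| * |b| = -(a * b) := by rw [← abs_mul, abs_of_neg h]
      rw [e, hab, sq_abs, sq_abs]; linarith
  have h2 := congrArg Real.sqrt h1
  rwa [Real.sqrt_sq (by positivity), Real.sqrt_sq (le_max_of_le_left hr)] at h2

lemma psiC_herm : ∀ v : ℝ × ℝ × ℝ × ℝ, (PsiC v).IsHermitian := by
  intro v
  ext i j
  fin_cases i <;> fin_cases j <;>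
    simp [PsiC, Matrix.conjTranspose_apply, Complex.ext_iff] <;>
    (try constructor) <;> first | ring | trivial

/-- `Ψ` is a real-linear isometric isomorphism from `(ℝ⁴, ‖·‖_hcyl)` onto
`(H₂(ℂ), ‖·‖_{c₁})`, where `‖(w,x,y,z)‖_hcyl = max {√(w²+x²+y²), |z|}`. -/
theorem stmt_15 :
    IsLinearMap ℝ PsiC ∧
    (∀ v : ℝ × ℝ × ℝ × ℝ, (PsiC v).IsHermitian) ∧
    Function.Injective PsiC ∧
    (∀ A : Matrix (Fin 2) (Fin 2) ℂ, A.IsHermitian → ∃ v, PsiC v = A) ∧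
    (∀ v : ℝ × ℝ × ℝ × ℝ, ∀ h : (PsiC v).IsHermitian,
      traceNormC (PsiC v) h
        = max (Real.sqrt (v.1 ^ 2 + v.2.1 ^ 2 + v.2.2.1 ^ 2)) |v.2.2.2|) := by
  refine ⟨⟨?_, ?_⟩, psiC_herm, ?_, ?_, ?_⟩
  · intro u v
    ext i j
    fin_cases i <;> fin_cases j <;>
      simp [PsiC, Complex.ext_iff] <;> (try constructor) <;> first | ring | trivial
  · intro c v
    ext i j
    fin_cases i <;> fin_cases j <;>
      simp [PsiC, Complex.ext_iff] <;> (try constructor) <;> first | ring | trivial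
  · -- injective
    intro u v h
    have h00 := congrFun (congrFun h 0) 0
    have h01 := congrFun (congrFun h 0) 1
    have h11 := congrFun (congrFun h 1) 1
    simp [PsiC, Complex.ext_iff] at h00 h01 h11
    obtain ⟨u1, u2, u3, u4⟩ := u
    obtain ⟨v1, v2, v3, v4⟩ := v
    simp_all
    exact ⟨by linarith, by linarith⟩
  · -- surjective
    intro A hA
    have h00 := congrFun (congrFun hA 0) 0
    have h01 := congrFun (congrFun hA 0) 1
    have h11 := congrFun (congrFun hA 1) 1
    simp [Matrix.conjTranspose_apply, Complex.ext_iff] at h00 h01 h11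
    refine ⟨(-2 * (A 0 1).im, 2 * (A 0 1).re,
      (A 0 0).re - (A 1 1).re, (A 0 0).re + (A 1 1).re), ?_⟩
    ext i j
    fin_cases i <;> fin_cases j <;>
      simp [PsiC, Complex.ext_iff] <;>
      constructor <;> first
        | linarith [h00, h11]
        | (simp_all; linarith)
  · -- trace norm
    intro v h
    have htr := trace_eq_sum_eig h
    have hdet := h.det_eq_prod_eigenvalues
    set a := h.eigenvalues 0 with ha
    set b := h.eigenvalues 1 with hb
    set r := Real.sqrt (v.1 ^ 2 + v.2.1 ^ 2 + v.2.2.1 ^ 2) with hrdef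
    have hr : 0 ≤ r := Real.sqrt_nonneg _
    have hr2 : r ^ 2 = v.1 ^ 2 + v.2.1 ^ 2 + v.2.2.1 ^ 2 := by
      rw [hrdef, Real.sq_sqrt (by positivity)]
    have htr2 : (PsiC v).trace = (v.2.2.2 : ℂ) := by
      simp [PsiC, Matrix.trace_fin_two]
      ring
    have hdet2 : (PsiC v).det =
        (((v.2.2.2 ^ 2 - (v.1 ^ 2 + v.2.1 ^ 2 + v.2.2.1 ^ 2)) / 4 : ℝ) : ℂ) := by
      simp [PsiC, Matrix.det_fin_two]
      ring_nf
      rw [Complex.I_sq]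
      ring
    rw [htr2, Fin.sum_univ_two] at htr
    rw [hdet2, Fin.prod_univ_two] at hdet
    have hsum : a + b = v.2.2.2 := by exact_mod_cast htr.symm
    have hprod : a * b = (v.2.2.2 ^ 2 - r ^ 2) / 4 := by
      rw [hr2, ha, hb]
      exact RCLike.ofReal_inj (K := ℂ) |>.mp (by push_cast at hdet ⊢; exact hdet.symm)
    rw [traceNormC, Fin.sum_univ_two]
    exact key_abs a b v.2.2.2 r hr hsum hprod
end
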